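/- For every finite subset V' of V, listing its elements in increasing order v_1 < v_2 < ⋯ < v_r, one has z^{γ_{v_1}} * z^{γ_{v_2}} * ⋯ * z^{γ_{v_r}} = (∏_{(v,w): v,w ∈ V', v < w} ∏_{e ∈ E with γ e v ≠ 0 and γ e w ≠ 0} Polynomial.aeval u_e (P_{γ e v, γ e w})) * z^{k}, where k : E → ℤ is given by k e = Σ_{v ∈ V'} γ e v. -/

import Mathlib

set_option linter.unusedSectionVars false

open MvPolynomial

variable {K : Type*} [Field K] {E : Type*} [Fintype E] [DecidableEq E]

noncomputable def Wx (K : Type*) [Field K] {E : Type*} (e : E) :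
    Module.End K (MvPolynomial E K) :=
  LinearMap.mulLeft K (X e)

noncomputable def Wy (K : Type*) [Field K] {E : Type*} (e : E) :
    Module.End K (MvPolynomial E K) :=
  (pderiv e).toLinearMap

noncomputable def Wu (K : Type*) [Field K] {E : Type*} (e : E) :
    Module.End K (MvPolynomial E K) :=
  Wy K e * Wx K e

lemma pderiv_pderiv_comm (a b : E) (p : MvPolynomial E K) :
    pderiv a (pderiv b p) = pderiv b (pderiv a p) := by
  induction p using MvPolynomial.induction_on with
  | C c => simp
  | add p q hp hq => simp [hp, hq]
  | mul_X p i hp =>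
      by_cases hai : a = i
      · subst hai
        by_cases hbi : b = a
        · subst hbi; rfl
        · simp [pderiv_mul, pderiv_X_of_ne (Ne.symm hbi), hp]; ring
      · by_cases hbi : b = i
        · subst hbi
          simp [pderiv_mul, pderiv_X_of_ne (Ne.symm hai), hp]; ring
        · simp [pderiv_mul, pderiv_X_of_ne (Ne.symm hai), pderiv_X_of_ne (Ne.symm hbi), hp]

lemma commute_Wx_Wx (a b : E) : Commute (Wx K a) (Wx K b) := by
  show _ = _
  apply LinearMap.ext; intro p
  simp [Wx, Module.End.mul_apply, mul_left_comm]

lemma commute_Wy_Wy (a b : E) : Commute (Wy K a) (Wy K b) := by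
  show _ = _
  apply LinearMap.ext; intro p
  simpa [Wy, Module.End.mul_apply] using pderiv_pderiv_comm (K := K) a b p

lemma commute_Wy_Wx {a b : E} (h : a ≠ b) : Commute (Wy K a) (Wx K b) := by
  show _ = _
  apply LinearMap.ext; intro p
  simp [Wy, Wx, Module.End.mul_apply, pderiv_mul, pderiv_X_of_ne (Ne.symm h)]

/-- `z_e^{(p)}` -/
noncomputable def Wz (K : Type*) [Field K] {E : Type*} (e : E) (p : ℤ) :
    Module.End K (MvPolynomial E K) :=
  if 0 ≤ p then Wx K e ^ p.toNat else Wy K e ^ (-p).toNat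

lemma commute_Wz {a b : E} (h : a ≠ b) (p q : ℤ) :
    Commute (Wz K a p) (Wz K b q) := by
  unfold Wz
  split_ifs <;>
    exact Commute.pow_pow (by
      first
        | exact commute_Wx_Wx a b
        | exact commute_Wy_Wy a b
        | exact commute_Wy_Wx h
        | exact (commute_Wy_Wx h.symm).symm) _ _

/-- `z^k` for `k : E → ℤ` -/
noncomputable def Zpow (K : Type*) [Field K] {E : Type*} [Fintype E] [DecidableEq E]
    (k : E → ℤ) : Module.End K (MvPolynomial E K) :=
  Finset.univ.noncommProd (fun e => Wz K e (k e))
    (fun a _ b _ hab => commute_Wz hab _ _)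

lemma commute_aeval_aeval {A : Type*} [Ring A] [Algebra K A] {a b : A} (h : Commute a b)
    (p q : Polynomial K) : Commute (Polynomial.aeval a p) (Polynomial.aeval b q) := by
  rw [Polynomial.aeval_eq_sum_range, Polynomial.aeval_eq_sum_range]
  apply Commute.sum_left
  intro i _
  apply Commute.sum_right
  intro j _
  exact ((h.pow_pow i j).smul_left _).smul_right _

lemma commute_Wu (a b : E) : Commute (Wu K a) (Wu K b) := by
  rcases eq_or_ne a b with rfl | h
  · rfl
  · exact Commute.mul_left
      ((commute_Wy_Wy a b).mul_right (commute_Wy_Wx h))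
      (((commute_Wy_Wx h.symm).symm).mul_right (commute_Wx_Wx a b))

/-- The defining property of the incidence matrix of a multiquiver: every row has
at most one positive and at most one negative entry. -/
def CondM {V E : Type*} (γ : E → V → ℤ) : Prop :=
  ∀ e : E, (∀ v w : V, 0 < γ e v → 0 < γ e w → v = w) ∧
    (∀ v w : V, γ e v < 0 → γ e w < 0 → v = w)

/-- Multiplication by `X` on `K[X]` (denoted `ξ`). -/
noncomputable def Bx (K : Type*) [Field K] : Module.End K (Polynomial K) :=
  LinearMap.mulLeft K (Polynomial.X : Polynomial K)

/-- The derivative `d/dX` on `K[X]` (denoted `η`). -/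
noncomputable def By (K : Type*) [Field K] : Module.End K (Polynomial K) :=
  Polynomial.derivative

/-- `η·ξ`. -/
noncomputable def Bu (K : Type*) [Field K] : Module.End K (Polynomial K) :=
  By K * Bx K

/-- `ζ^{(p)} = ξ^p` if `p ≥ 0`, `η^{−p}` if `p < 0`. -/
noncomputable def Bz (K : Type*) [Field K] (p : ℤ) : Module.End K (Polynomial K) :=
  if 0 ≤ p then Bx K ^ p.toNat else By K ^ (-p).toNat

/-- The factor `∏_{e between v and w} P_{γ e v, γ e w}(u_e)` attached to an
ordered pair `(v, w)` of vertices. -/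
noncomputable def edgeFactor (K : Type*) [Field K] {V E : Type*} [Fintype E] [DecidableEq E]
    (γ : E → V → ℤ) (P : ℤ → ℤ → Polynomial K) (p : V × V) :
    Module.End K (MvPolynomial E K) :=
  (Finset.univ.filter fun e : E => γ e p.1 ≠ 0 ∧ γ e p.2 ≠ 0).noncommProd
    (fun e => Polynomial.aeval (Wu K e) (P (γ e p.1) (γ e p.2)))
    (fun a _ b _ _ => commute_aeval_aeval (commute_Wu a b) _ _)

lemma commute_edgeFactor (K : Type*) [Field K] {V E : Type*} [Fintype E] [DecidableEq E]
    (γ : E → V → ℤ) (P : ℤ → ℤ → Polynomial K) (p q : V × V) :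
    Commute (edgeFactor K γ P p) (edgeFactor K γ P q) := by
  unfold edgeFactor
  apply Finset.noncommProd_commute
  intro x _
  apply Commute.symm
  apply Finset.noncommProd_commute
  intro z _
  exact commute_aeval_aeval (commute_Wu x z) _ _

/-!
Each `z_e^{(p)}` acts on the variable `X_e` alone, so the rank-one relation
`ζ^{(m)} ζ^{(n)} = P_{m,n}(ηξ) ζ^{(m+n)}` transfers to
`z_e^{(m)} z_e^{(n)} = P_{m,n}(u_e) z_e^{(m+n)}`. Since `ηξ` acts on `X ^ j` by `j + 1`, the
relation also forces `P_{m,0} = P_{0,n} = 1` in characteristic zero. Hence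
`z^k z^l = (∏_{e : k e ≠ 0, l e ≠ 0} P_{k e, l e}(u_e)) z^{k+l}`.

Multiplying the sorted product out from its smallest vertex `a`, the factor `z^{γ_a}` commutes past
the factors of the pairs `v < w` above it, because an edge meeting both `v` and `w` does not meet
`a`. For the same reason an edge at `a` meets at most one other vertex, so the factor produced by
`z^{γ_a} z^{Σ_{b > a} γ_b}` splits as the product of the factors of the pairs `(a, b)`.
-/

section Intertwining

variable {M N : Type*} [AddCommGroup M] [Module K M] [AddCommGroup N] [Module K N]
  (T : M →ₗ[K] N) {f f' : Module.End K N} {g g' : Module.End K M}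

theorem LinearMap.mul_comp_eq_comp_mul (h : f ∘ₗ T = T ∘ₗ g) (h' : f' ∘ₗ T = T ∘ₗ g') :
    (f * f') ∘ₗ T = T ∘ₗ (g * g') := by
  rw [Module.End.mul_eq_comp, Module.End.mul_eq_comp, LinearMap.comp_assoc, h',
    ← LinearMap.comp_assoc, h, LinearMap.comp_assoc]

theorem LinearMap.pow_comp_eq_comp_pow (h : f ∘ₗ T = T ∘ₗ g) (n : ℕ) :
    (f ^ n) ∘ₗ T = T ∘ₗ (g ^ n) := by
  induction n with
  | zero => rfl
  | succ n ih => rw [pow_succ, pow_succ]; exact LinearMap.mul_comp_eq_comp_mul T ih h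

theorem LinearMap.aeval_comp_eq_comp_aeval (h : f ∘ₗ T = T ∘ₗ g) (Q : Polynomial K) :
    Polynomial.aeval f Q ∘ₗ T = T ∘ₗ Polynomial.aeval g Q := by
  induction Q using Polynomial.induction_on' with
  | add p q hp hq => rw [map_add, map_add, LinearMap.add_comp, LinearMap.comp_add, hp, hq]
  | monomial n c =>
    rw [Polynomial.aeval_monomial, Polynomial.aeval_monomial, Module.algebraMap_end_eq_smul_id,
      Module.algebraMap_end_eq_smul_id, smul_mul_assoc, smul_mul_assoc, ← Module.End.one_eq_id,
      ← Module.End.one_eq_id, one_mul, one_mul, LinearMap.smul_comp, LinearMap.comp_smul,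
      LinearMap.pow_comp_eq_comp_pow T h]

end Intertwining

theorem Finset.noncommProd_map_eq_map_prod {ι M N F : Type*} [CommMonoid M] [Monoid N]
    [FunLike F M N] [MonoidHomClass F M N] (φ : F) (s : Finset ι) (f : ι → M) (comm) :
    s.noncommProd (fun i => φ (f i)) comm = φ (∏ i ∈ s, f i) :=
  (Finset.map_noncommProd s f _ φ).symm.trans (congrArg φ (Finset.noncommProd_eq_prod s f))

theorem Finset.prod_comp_sum_of_subsingleton {ι N M : Type*} [AddCommMonoid N] [CommMonoid M]
    {s : Finset ι} {g : ι → N} (φ : N → M) (hφ : φ 0 = 1)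
    (hg : ∀ b ∈ s, ∀ c ∈ s, g b ≠ 0 → g c ≠ 0 → b = c) :
    ∏ b ∈ s, φ (g b) = φ (∑ b ∈ s, g b) := by
  by_cases h : ∃ b ∈ s, g b ≠ 0
  · obtain ⟨b, hb, hgb⟩ := h
    have hzero : ∀ c ∈ s, c ≠ b → g c = 0 := fun c hc hcb =>
      by_contra fun hgc => hcb (hg c hc b hb hgc hgb)
    rw [Finset.prod_eq_single_of_mem b hb fun c hc hcb => by rw [hzero c hc hcb, hφ],
      Finset.sum_eq_single_of_mem b hb hzero]
  · simp only [not_exists, not_and, not_not] at h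
    rw [Finset.prod_eq_one fun b hb => by rw [h b hb, hφ], Finset.sum_eq_zero h, hφ]

theorem Finset.prod_filter_lt_insert_of_forall_lt {V M : Type*} [LinearOrder V] [CommMonoid M]
    (f : V × V → M) {a : V} {s : Finset V} (ha : ∀ b ∈ s, a < b) :
    ∏ p ∈ (insert a s ×ˢ insert a s).filter (fun p => p.1 < p.2), f p =
      (∏ b ∈ s, f (a, b)) * ∏ p ∈ (s ×ˢ s).filter (fun p => p.1 < p.2), f p := by
  have has : a ∉ s := fun h => lt_irrefl a (ha a h)
  simp only [Finset.prod_filter, Finset.prod_product, Finset.prod_insert has, lt_irrefl, if_false,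
    one_mul]
  congr 1
  · exact Finset.prod_congr rfl fun b hb => if_pos (ha b hb)
  · exact Finset.prod_congr rfl fun b hb => by rw [if_neg (ha b hb).asymm, one_mul]

theorem CondM.eq_or_eq_or_eq {V : Type*} {γ : E → V → ℤ} (hM : CondM γ) {e : E} {u v w : V}
    (hu : γ e u ≠ 0) (hv : γ e v ≠ 0) (hw : γ e w ≠ 0) : u = v ∨ u = w ∨ v = w := by
  obtain ⟨hpos, hneg⟩ := hM e
  rcases hu.lt_or_gt with hu | hu <;> rcases hv.lt_or_gt with hv | hv <;>
    rcases hw.lt_or_gt with hw | hw <;>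
    first
      | exact .inl (hneg _ _ hu hv) | exact .inl (hpos _ _ hu hv)
      | exact .inr (.inl (hneg _ _ hu hw)) | exact .inr (.inl (hpos _ _ hu hw))
      | exact .inr (.inr (hneg _ _ hv hw)) | exact .inr (.inr (hpos _ _ hv hw))

theorem Bz_zero : Bz K 0 = 1 := by
  simp [Bz]

theorem aeval_Bu_X_pow (Q : Polynomial K) (j : ℕ) :
    Polynomial.aeval (Bu K) Q (Polynomial.X ^ j) =
      Q.eval ((j + 1 : ℕ) : K) • Polynomial.X ^ j := by
  refine Module.End.aeval_apply_of_hasEigenvector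
    ⟨Module.End.mem_eigenspace_iff.mpr ?_, pow_ne_zero _ Polynomial.X_ne_zero⟩
  rw [Bu, Module.End.mul_apply, Bx, LinearMap.mulLeft_apply, ← pow_succ', By]
  simp [Polynomial.smul_eq_C_mul]

theorem X_pow_mem_range_Bz [CharZero K] (p : ℤ) (j : ℕ) :
    Polynomial.X ^ (j + p.toNat) ∈ LinearMap.range (Bz K p) := by
  unfold Bz
  split_ifs with hp
  · refine ⟨Polynomial.X ^ j, ?_⟩
    rw [Bx, LinearMap.pow_mulLeft, LinearMap.mulLeft_apply, ← pow_add, add_comm]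
  · have hk : ((j + (-p).toNat).descFactorial (-p).toNat : K) ≠ 0 :=
      Nat.cast_ne_zero.mpr (Nat.descFactorial_eq_zero_iff_lt.not.mpr (by omega))
    refine ⟨((j + (-p).toNat).descFactorial (-p).toNat : K)⁻¹ • Polynomial.X ^ (j + (-p).toNat),
      ?_⟩
    rw [map_smul, By, Module.End.pow_apply, Polynomial.iterate_derivative_X_pow_eq_smul,
      smul_smul, inv_mul_cancel₀ hk, one_smul, Nat.add_sub_cancel, Int.toNat_of_nonpos (by omega),
      add_zero]

theorem eq_one_of_Bz_eq_aeval_Bu_mul [CharZero K] {p : ℤ} {Q : Polynomial K}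
    (h : Bz K p = Polynomial.aeval (Bu K) Q * Bz K p) : Q = 1 := by
  have hval : ∀ j : ℕ, Q.eval ((j + p.toNat + 1 : ℕ) : K) =
      (1 : Polynomial K).eval ((j + p.toNat + 1 : ℕ) : K) := by
    intro j
    obtain ⟨y, hy⟩ := X_pow_mem_range_Bz (K := K) p j
    have hfix := LinearMap.congr_fun h y
    rw [Module.End.mul_apply, hy, aeval_Bu_X_pow] at hfix
    exact (smul_left_injective K (pow_ne_zero _ Polynomial.X_ne_zero) (hfix.symm.trans
      (one_smul K _).symm)).trans Polynomial.eval_one.symm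
  exact Polynomial.eq_of_infinite_eval_eq _ _
    (Set.infinite_of_injective_forall_mem (f := fun j : ℕ => ((j + p.toNat + 1 : ℕ) : K))
      (fun i j hij => by simpa using hij) hval)

variable (K) in
/-- `P` satisfies the defining relation of the polynomials `P_{m,n}`. -/
def IsStructurePoly (P : ℤ → ℤ → Polynomial K) : Prop :=
  ∀ m n : ℤ, Bz K m * Bz K n = Polynomial.aeval (Bu K) (P m n) * Bz K (m + n)

theorem P_eq_one [CharZero K] {P : ℤ → ℤ → Polynomial K} (hP : IsStructurePoly K P)
    {m n : ℤ} (h : m = 0 ∨ n = 0) : P m n = 1 := by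
  rcases h with rfl | rfl
  · refine eq_one_of_Bz_eq_aeval_Bu_mul (p := n) ?_
    simpa [Bz_zero] using hP 0 n
  · refine eq_one_of_Bz_eq_aeval_Bu_mul (p := m) ?_
    simpa [Bz_zero] using hP m 0

/-- The copy of `K[X]` inside `K[X_e : e ∈ E]` obtained by substituting `X_e` for `X` and
multiplying by the monomial `d` with its `e`-th exponent erased. -/
noncomputable def embedAt (e : E) (d : E →₀ ℕ) : Polynomial K →ₗ[K] MvPolynomial E K :=
  LinearMap.mulLeft K (monomial (d.erase e) 1) ∘ₗ (Polynomial.aeval (X e)).toLinearMap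

theorem embedAt_X_pow (e : E) (d : E →₀ ℕ) :
    embedAt e d (Polynomial.X ^ d e) = (monomial d 1 : MvPolynomial E K) := by
  rw [embedAt, LinearMap.comp_apply, AlgHom.toLinearMap_apply, map_pow, Polynomial.aeval_X,
    LinearMap.mulLeft_apply, X_pow_eq_monomial, monomial_mul, one_mul,
    Finsupp.erase_add_single]

theorem Wx_comp_embedAt (e : E) (d : E →₀ ℕ) :
    Wx K e ∘ₗ embedAt e d = embedAt e d ∘ₗ Bx K := by
  refine LinearMap.ext fun q => ?_
  simp only [Wx, Bx, embedAt, LinearMap.comp_apply, LinearMap.mulLeft_apply,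
    AlgHom.toLinearMap_apply, map_mul, Polynomial.aeval_X]
  ring

theorem Wy_comp_embedAt (e : E) (d : E →₀ ℕ) :
    Wy K e ∘ₗ embedAt e d = embedAt e d ∘ₗ By K := by
  refine LinearMap.ext fun q => ?_
  have h : pderiv e (monomial (d.erase e) (1 : K)) = 0 := by simp [pderiv_monomial]
  simp [Wy, By, embedAt, Derivation.leibniz, h]

theorem Wz_comp_embedAt (e : E) (d : E →₀ ℕ) (p : ℤ) :
    Wz K e p ∘ₗ embedAt e d = embedAt e d ∘ₗ Bz K p := by
  unfold Wz Bz
  split_ifs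
  · exact LinearMap.pow_comp_eq_comp_pow _ (Wx_comp_embedAt e d) _
  · exact LinearMap.pow_comp_eq_comp_pow _ (Wy_comp_embedAt e d) _

theorem Wu_comp_embedAt (e : E) (d : E →₀ ℕ) :
    Wu K e ∘ₗ embedAt e d = embedAt e d ∘ₗ Bu K :=
  LinearMap.mul_comp_eq_comp_mul _ (Wy_comp_embedAt e d) (Wx_comp_embedAt e d)

theorem Wz_mul_Wz {P : ℤ → ℤ → Polynomial K} (hP : IsStructurePoly K P) (e : E) (m n : ℤ) :
    Wz K e m * Wz K e n = Polynomial.aeval (Wu K e) (P m n) * Wz K e (m + n) := by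
  refine Module.Basis.ext (basisMonomials E K) fun d => ?_
  have key : (Wz K e m * Wz K e n) ∘ₗ embedAt e d =
      (Polynomial.aeval (Wu K e) (P m n) * Wz K e (m + n)) ∘ₗ embedAt e d := by
    rw [LinearMap.mul_comp_eq_comp_mul _ (Wz_comp_embedAt e d m) (Wz_comp_embedAt e d n), hP,
      LinearMap.mul_comp_eq_comp_mul _
        (LinearMap.aeval_comp_eq_comp_aeval _ (Wu_comp_embedAt e d) _) (Wz_comp_embedAt e d _)]
  simpa [embedAt_X_pow] using LinearMap.congr_fun key (Polynomial.X ^ d e)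

theorem Wz_zero (e : E) : Wz K e 0 = 1 := by
  simp [Wz]

theorem commute_Wz_Wu {e f : E} (h : e ≠ f) (p : ℤ) : Commute (Wz K e p) (Wu K f) := by
  unfold Wz Wu
  split_ifs
  · exact Commute.pow_left
      ((commute_Wy_Wx (K := K) (Ne.symm h)).symm.mul_right (commute_Wx_Wx e f)) _
  · exact Commute.pow_left ((commute_Wy_Wy (K := K) e f).mul_right (commute_Wy_Wx h)) _

theorem commute_Wz_aeval_Wu {e f : E} (h : e ≠ f) (p : ℤ) (Q : Polynomial K) :
    Commute (Wz K e p) (Polynomial.aeval (Wu K f) Q) := by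
  simpa using commute_aeval_aeval (commute_Wz_Wu h p) Polynomial.X Q

variable (K E) in
/-- All the factors `P(u_e)` live in this commutative algebra, where products over edges and over
pairs of vertices can be rearranged with the ordinary `Finset.prod` lemmas. -/
noncomputable def uSubalgebra : Subalgebra K (Module.End K (MvPolynomial E K)) :=
  Algebra.adjoin K (Set.range (Wu K))

instance : IsMulCommutative (uSubalgebra K E) :=
  Algebra.isMulCommutative_adjoin K (by rintro _ ⟨a, rfl⟩ _ ⟨b, rfl⟩; exact commute_Wu a b)

open scoped IsMulCommutative

variable (K) in
noncomputable def uGen (e : E) : uSubalgebra K E :=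
  ⟨Wu K e, Algebra.subset_adjoin ⟨e, rfl⟩⟩

variable (K) in
noncomputable def crossFactor (P : ℤ → ℤ → Polynomial K) (k l : E → ℤ) : uSubalgebra K E :=
  ∏ e ∈ Finset.univ.filter (fun e => k e ≠ 0 ∧ l e ≠ 0),
    Polynomial.aeval (uGen K e) (P (k e) (l e))

theorem coe_prod_aeval_uGen (s : Finset E) (Q : E → Polynomial K) :
    ((∏ e ∈ s, Polynomial.aeval (uGen K e) (Q e) : uSubalgebra K E) :
        Module.End K (MvPolynomial E K)) =
      s.noncommProd (fun e => Polynomial.aeval (Wu K e) (Q e))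
        (fun a _ b _ _ => commute_aeval_aeval (commute_Wu a b) _ _) := by
  rw [← Subalgebra.coe_val,
    ← Finset.noncommProd_map_eq_map_prod _ _ _ fun _ _ _ _ _ => (Commute.all _ _).map _]
  exact Finset.noncommProd_congr rfl (fun e _ => Polynomial.aeval_subalgebra_coe _ _ _) _

theorem edgeFactor_eq_coe_crossFactor {V : Type*} (γ : E → V → ℤ) (P : ℤ → ℤ → Polynomial K)
    (p : V × V) :
    edgeFactor K γ P p = crossFactor K P (fun e => γ e p.1) (fun e => γ e p.2) :=
  (coe_prod_aeval_uGen _ _).symm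

theorem crossFactor_eq_prod_univ [CharZero K] {P : ℤ → ℤ → Polynomial K}
    (hP : IsStructurePoly K P) (k l : E → ℤ) :
    crossFactor K P k l = ∏ e, Polynomial.aeval (uGen K e) (P (k e) (l e)) := by
  refine Finset.prod_filter_of_ne fun e _ hne => ?_
  by_contra h
  rw [P_eq_one hP (by tauto), map_one] at hne
  exact hne rfl

theorem Zpow_zero : Zpow K (0 : E → ℤ) = 1 :=
  (Finset.noncommProd_eq_pow_card _ _ _ 1 fun e _ => Wz_zero e).trans (one_pow _)

theorem Zpow_mul [CharZero K] {P : ℤ → ℤ → Polynomial K} (hP : IsStructurePoly K P)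
    (k l : E → ℤ) :
    Zpow K k * Zpow K l = crossFactor K P k l * Zpow K (k + l) := by
  let F e := Polynomial.aeval (Wu K e) (P (k e) (l e))
  have hF : ∀ a b : E, Commute (F a) (F b) := fun a b => commute_aeval_aeval (commute_Wu a b) _ _
  calc Zpow K k * Zpow K l
      = Finset.univ.noncommProd (fun e => Wz K e (k e) * Wz K e (l e))
          (Finset.noncommProd_mul_distrib_aux (fun a _ b _ hab => commute_Wz hab _ _)
            (fun a _ b _ hab => commute_Wz hab _ _) fun a _ b _ hab => commute_Wz hab _ _) :=
        (Finset.noncommProd_mul_distrib _ _ _ _ fun a _ b _ hab => commute_Wz hab _ _).symm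
    _ = Finset.univ.noncommProd (fun e => F e * Wz K e ((k + l) e))
          (Finset.noncommProd_mul_distrib_aux (fun a _ b _ _ => hF a b)
            (fun a _ b _ hab => commute_Wz hab _ _)
            fun a _ b _ hab => commute_Wz_aeval_Wu hab _ _) :=
        Finset.noncommProd_congr rfl (fun e _ => Wz_mul_Wz hP e _ _) _
    _ = Finset.univ.noncommProd F (fun a _ b _ _ => hF a b) * Zpow K (k + l) :=
        Finset.noncommProd_mul_distrib _ _ _ _ fun a _ b _ hab => commute_Wz_aeval_Wu hab _ _
    _ = crossFactor K P k l * Zpow K (k + l) := by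
        rw [crossFactor_eq_prod_univ hP, coe_prod_aeval_uGen]

theorem commute_Zpow_crossFactor (P : ℤ → ℤ → Polynomial K) {k l m : E → ℤ}
    (h : ∀ e, l e ≠ 0 → m e ≠ 0 → k e = 0) :
    Commute (Zpow K k) (crossFactor K P l m) := by
  rw [crossFactor, coe_prod_aeval_uGen]
  refine Finset.noncommProd_commute _ _ _ _ fun f hf =>
    (Finset.noncommProd_commute _ _ _ _ fun e _ => ?_).symm
  rcases eq_or_ne e f with rfl | hef
  · obtain ⟨hl, hm⟩ := (Finset.mem_filter.mp hf).2
    rw [h e hl hm, Wz_zero]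
    exact Commute.one_right _
  · exact (commute_Wz_aeval_Wu hef _ _).symm

theorem crossFactor_sum [CharZero K] {V : Type*} {γ : E → V → ℤ} (hM : CondM γ)
    {P : ℤ → ℤ → Polynomial K} (hP : IsStructurePoly K P) {a : V} {s : Finset V} (ha : a ∉ s) :
    crossFactor K P (fun e => γ e a) (fun e => ∑ b ∈ s, γ e b) =
      ∏ b ∈ s, crossFactor K P (fun e => γ e a) (fun e => γ e b) := by
  simp only [crossFactor_eq_prod_univ hP]
  rw [Finset.prod_comm]
  refine Finset.prod_congr rfl fun e _ => ?_
  by_cases hea : γ e a = 0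
  · simp [hea, P_eq_one hP (.inl rfl)]
  · refine (Finset.prod_comp_sum_of_subsingleton
      (fun n => Polynomial.aeval (uGen K e) (P (γ e a) n))
      (by rw [P_eq_one hP (.inr rfl), map_one]) fun b hb c hc hb0 hc0 => ?_).symm
    rcases hM.eq_or_eq_or_eq hea hb0 hc0 with rfl | rfl | hbc
    · exact absurd hb ha
    · exact absurd hc ha
    · exact hbc

theorem list_prod_Zpow_sort [CharZero K] {V : Type*} [LinearOrder V] {γ : E → V → ℤ}
    (hM : CondM γ) {P : ℤ → ℤ → Polynomial K} (hP : IsStructurePoly K P) (s : Finset V) :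
    ((s.sort (· ≤ ·)).map fun v => Zpow K fun e => γ e v).prod =
      (∏ p ∈ (s ×ˢ s).filter (fun p => p.1 < p.2),
          crossFactor K P (fun e => γ e p.1) (fun e => γ e p.2) : uSubalgebra K E) *
        Zpow K (fun e => ∑ v ∈ s, γ e v) := by
  induction s using Finset.induction_on_min with
  | empty => simp [← Pi.zero_def, Zpow_zero]
  | insert a s ha ih =>
    have has : a ∉ s := fun h => lt_irrefl a (ha a h)
    have hcomm : Commute (Zpow K fun e => γ e a)
        (∏ p ∈ (s ×ˢ s).filter (fun p => p.1 < p.2),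
          crossFactor K P (fun e => γ e p.1) (fun e => γ e p.2) : uSubalgebra K E) := by
      rw [← Subalgebra.coe_val,
        ← Finset.noncommProd_map_eq_map_prod _ _ _ fun _ _ _ _ _ => (Commute.all _ _).map _]
      refine Finset.noncommProd_commute _ _ _ _ fun p hp => commute_Zpow_crossFactor P ?_
      obtain ⟨⟨hv, hw⟩, hvw⟩ := Finset.mem_filter.mp hp |>.imp_left Finset.mem_product.mp
      intro e he1 he2
      by_contra hea
      rcases hM.eq_or_eq_or_eq hea he1 he2 with h | h | h
      · exact has (h ▸ hv)
      · exact has (h ▸ hw)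
      · exact hvw.ne h
    have hsum : ((fun e => γ e a) + fun e => ∑ v ∈ s, γ e v) = fun e => ∑ v ∈ insert a s, γ e v :=
      funext fun e => (Finset.sum_insert has).symm
    rw [Finset.sort_insert _ (fun b hb => (ha b hb).le) has, List.map_cons, List.prod_cons, ih,
      ← mul_assoc, hcomm.eq, mul_assoc, Zpow_mul hP, hsum, crossFactor_sum hM hP has, ← mul_assoc,
      ← Subalgebra.coe_mul, mul_comm, Finset.prod_filter_lt_insert_of_forall_lt _ ha]

theorem varphi_on_sorted_product {K V E : Type*} [Field K] [CharZero K]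
    [Fintype E] [DecidableEq E] [LinearOrder V]
    (γ : E → V → ℤ) (hM : CondM γ)
    (P : ℤ → ℤ → Polynomial K)
    (hP : ∀ m n : ℤ, Bz K m * Bz K n = Polynomial.aeval (Bu K) (P m n) * Bz K (m + n))
    (V' : Finset V) :
    ((V'.sort (· ≤ ·)).map fun v => Zpow K fun e => γ e v).prod =
      ((V' ×ˢ V').filter fun p : V × V => p.1 < p.2).noncommProd
          (edgeFactor K γ P) (fun p _ q _ _ => commute_edgeFactor K γ P p q)
        * Zpow K (fun e => ∑ v ∈ V', γ e v) := by
  rw [list_prod_Zpow_sort hM hP, ← Subalgebra.coe_val,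
    ← Finset.noncommProd_map_eq_map_prod _ _ _ fun _ _ _ _ _ => (Commute.all _ _).map _]
  exact congrArg (· * _) <|
    Finset.noncommProd_congr rfl (fun p _ => (edgeFactor_eq_coe_crossFactor γ P p).symm) _
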